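/- arXiv:2211.13361 — 2 statements merged into one kernel-verified Lean document; each statement's English description precedes it below -/
import Mathlib

section
/- Let A be a set of infinite regular cardinals and κ a regular cardinal with κ ∈ spec(A) and κ < sup(A). Then κ ∈ spec(A ∩ (κ+1)), i.e., κ is in the Tukey spectrum of the set {a ∈ A : a ≤ κ}. -/
universe u

open Cardinal Set

namespace TukeySpec

/-- A subset `S` of a preorder is cofinal if every element has an upper bound in `S`. -/
def IsCofinal {P : Type*} [Preorder P] (S : Set P) : Prop :=
  ∀ p : P, ∃ s ∈ S, p ≤ s

/-- `Q` is a Tukey quotient of `P` (i.e. `P ≥_T Q`): there is a map `P → Q`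
sending cofinal sets to cofinal sets. -/
def TukeyQuot (P : Type*) (Q : Type*) [Preorder P] [Preorder Q] : Prop :=
  ∃ φ : P → Q, ∀ S : Set P, IsCofinal S → IsCofinal (φ '' S)

/-- `P` has calibre `(κ, l, m)`. -/
def Calibre (P : Type u) [Preorder P] (κ l m : Cardinal.{u}) : Prop :=
  ∀ P' : Set P, #P' = κ → ∃ R ⊆ P', #R = l ∧ ∀ B ⊆ R, #B = m → BddAbove B

/-- `P` has calibre `κ` (the simplified form): every `κ`-sized subset has a
`κ`-sized subset which is bounded in `P`. -/
def CalibreSimple (P : Type u) [Preorder P] (κ : Cardinal.{u}) : Prop :=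
  ∀ P' : Set P, #P' = κ → ∃ R ⊆ P', #R = κ ∧ BddAbove R

/-- The Tukey spectrum of a poset: all regular cardinals `κ` with `P ≥_T κ`,
where `κ` carries its usual (ordinal) ordering. -/
def specPoset (P : Type u) [Preorder P] : Set Cardinal.{u} :=
  {κ | κ.IsRegular ∧ TukeyQuot P ↥(Set.Iio κ.ord)}

/-- The product `∏A` of a set of cardinals: all functions on `A` with
`f a < a` (as ordinals). -/
def piSet (A : Set Cardinal.{0}) : Set (↥A → Ordinal.{0}) :=
  {f | ∀ a : ↥A, f a < (a : Cardinal).ord}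

/-- A family of members of `∏A` is bounded if it has an upper bound in `(∏A, ≤)`
(pointwise order). -/
def BddIn (A : Set Cardinal.{0}) (S : Set (↥A → Ordinal.{0})) : Prop :=
  ∃ h ∈ piSet A, ∀ f ∈ S, ∀ a : ↥A, f a ≤ h a

/-- The Tukey spectrum of a set `A` of regular cardinals: all regular `κ` for which
there is a `κ`-sized family `F ⊆ ∏A` all of whose `κ`-sized subfamilies are
unbounded in `(∏A, ≤)`. -/
def spec (A : Set Cardinal.{0}) : Set Cardinal.{0} :=
  {κ | κ.IsRegular ∧ ∃ F ⊆ piSet A, #F = Cardinal.lift.{1} κ ∧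
    ∀ F₀ ⊆ F, #F₀ = Cardinal.lift.{1} κ → ¬ BddIn A F₀}

/-- `cf(∏A/D)`: the least cardinality of a subset of `∏A` which is cofinal
modulo the ultrafilter `D`. -/
noncomputable def cofUlt (A : Set Cardinal.{0}) (D : Ultrafilter ↥A) : Cardinal.{1} :=
  sInf {c : Cardinal.{1} | ∃ S ⊆ piSet A, #S = c ∧
    ∀ f ∈ piSet A, ∃ g ∈ S, {a : ↥A | f a ≤ g a} ∈ D}

/-- `pcf(A)`: the set of all cofinalities `cf(∏A/D)` as `D` ranges over
ultrafilters on `A`. -/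
def pcf (A : Set Cardinal.{0}) : Set Cardinal.{0} :=
  {κ | ∃ D : Ultrafilter ↥A, Cardinal.lift.{1} κ = cofUlt A D}

/-- `ub(F)`: the set of coordinates `a ∈ A` where the family `F` is unbounded. -/
def ub (A : Set Cardinal.{0}) (F : Set (↥A → Ordinal.{0})) : Set ↥A :=
  {a | ∀ β < (a : Cardinal).ord, ∃ f ∈ F, β < f a}

/-- The strong part of the Tukey spectrum: `l ∈ spec*(A)` iff there is an
`l`-sized family `F ⊆ ∏A` such that every `l`-sized subfamily has a set of
unbounded coordinates which is unbounded in `sup A`. -/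
def specStarMem (A : Set Cardinal.{0}) (l : Cardinal.{0}) : Prop :=
  l.IsRegular ∧ ∃ F ⊆ piSet A, #F = Cardinal.lift.{1} l ∧
    ∀ F₀ ⊆ F, #F₀ = Cardinal.lift.{1} l →
      ∀ β < sSup A, ∃ a ∈ ub A F₀, β < (a : Cardinal)

/-- `κ` is a limit point of the set `X` of cardinals. -/
def IsLimitPt (X : Set Cardinal.{0}) (κ : Cardinal.{0}) : Prop :=
  ∀ β < κ, ∃ x ∈ X, β < x ∧ x < κ

/-- `C` is a closed unbounded subset of `κ`. -/
def IsClubIn (C : Set Ordinal.{0}) (κ : Ordinal.{0}) : Prop :=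
  C ⊆ Set.Iio κ ∧ (∀ β < κ, ∃ o ∈ C, β < o) ∧
    ∀ β < κ, β ≠ 0 → (∀ γ < β, ∃ o ∈ C, γ < o ∧ o < β) → β ∈ C

/-- A set `S` of cardinals is stationary in `κ`: it meets every club of `κ`. -/
def StatIn (S : Set Cardinal.{0}) (κ : Cardinal.{0}) : Prop :=
  ∀ C : Set Ordinal.{0}, IsClubIn C κ.ord → ∃ a ∈ S, a.ord ∈ C

/-- `κ` is Mahlo: strongly inaccessible and the regular cardinals below `κ`
are stationary in `κ`. -/
def IsMahlo (κ : Cardinal.{0}) : Prop :=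
  κ.IsInaccessible ∧ StatIn {a | a < κ ∧ a.IsRegular} κ

/-- `κ` is weakly compact: strongly inaccessible and `κ → (κ)²₂`. -/
def IsWeaklyCompact (κ : Cardinal.{0}) : Prop :=
  κ.IsInaccessible ∧
    ∀ c : Ordinal.{0} → Ordinal.{0} → Bool,
      ∃ H ⊆ Set.Iio κ.ord, #H = Cardinal.lift.{1} κ ∧
        ∃ b : Bool, ∀ α ∈ H, ∀ β ∈ H, α < β → c α β = b

/-- `θ` carries a Jónsson algebra: there is `F` from finite subsets of `θ` to `θ`
such that `F` applied to finite subsets of any `θ`-sized `H ⊆ θ` covers `θ`. -/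
def CarriesJonsson (θ : Cardinal.{0}) : Prop :=
  ∃ F : Finset Ordinal.{0} → Ordinal.{0},
    (∀ s : Finset Ordinal.{0}, (↑s : Set Ordinal) ⊆ Set.Iio θ.ord → F s < θ.ord) ∧
    ∀ H ⊆ Set.Iio θ.ord, #H = Cardinal.lift.{1} θ →
      ∀ γ < θ.ord, ∃ s : Finset Ordinal.{0}, (↑s : Set Ordinal) ⊆ H ∧ F s = γ

/-- `cf(∏A/J_bd)`: the least cardinality of a subset of `∏A` cofinal modulo
the ideal of bounded subsets of `A`. -/
noncomputable def cofJbd (A : Set Cardinal.{0}) : Cardinal.{1} :=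
  sInf {c : Cardinal.{1} | ∃ S ⊆ piSet A, #S = c ∧
    ∀ f ∈ piSet A, ∃ g ∈ S, ∃ b < sSup A, ∀ a : ↥A, b < (a : Cardinal) → f a ≤ g a}

/-- `μ` is a limit cardinal. -/
def IsLimitCard (μ : Cardinal.{0}) : Prop :=
  ℵ₀ ≤ μ ∧ ∀ ν < μ, Order.succ ν < μ


lemma isRegular_lift {κ : Cardinal.{0}} (h : κ.IsRegular) :
    (Cardinal.lift.{1} κ).IsRegular := by
  constructor
  · rw [← Cardinal.lift_aleph0.{1,0}]; exact Cardinal.lift_le.2 h.1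
  · rw [← Cardinal.lift_ord, ← Ordinal.lift_cof]
    exact Cardinal.lift_le.2 h.2

/-- Core lemma: a `κ`-sized family whose restrictions to the coordinates `≤ κ`
are bounded is bounded in `∏A`. -/
lemma bdd_of_restr_bdd (A : Set Cardinal.{0}) (hA : ∀ a ∈ A, a.IsRegular)
    (κ : Cardinal.{0})
    (F₀ : Set (↥A → Ordinal.{0})) (hF₀ : F₀ ⊆ piSet A)
    (hcard : #F₀ = Cardinal.lift.{1} κ)
    (h : ↥{a ∈ A | a ≤ κ} → Ordinal.{0}) (hh : h ∈ piSet {a ∈ A | a ≤ κ})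
    (hb : ∀ f ∈ F₀, ∀ a : ↥{a ∈ A | a ≤ κ}, f ⟨a.1, a.2.1⟩ ≤ h a) :
    BddIn A F₀ := by
  classical
  have hout : #(Quotient.out κ) = κ := Cardinal.mk_out κ
  have hex : Nonempty (↥F₀ ≃ Quotient.out κ) := by
    rw [← Cardinal.lift_mk_eq']
    rw [Cardinal.lift_id'.{0,1}, hcard, hout]
  obtain ⟨e⟩ := hex
  set G : ↥A → Ordinal.{0} :=
    fun a => ⨆ i : Quotient.out κ, ((e.symm i : ↥F₀) : ↥A → Ordinal.{0}) a with hG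
  refine ⟨fun a => if hle : (a : Cardinal) ≤ κ then h ⟨a.1, a.2, hle⟩ else G a, ?_, ?_⟩
  · intro a
    by_cases hle : (a : Cardinal) ≤ κ
    · simp only [dif_pos hle]
      exact hh ⟨a.1, a.2, hle⟩
    · simp only [dif_neg hle]
      have hlt : κ < (a : Cardinal) := not_le.mp hle
      have hareg := hA a.1 a.2
      refine Ordinal.iSup_lt_ord ?_ ?_
      · rw [hout, hareg.cof_eq]; exact hlt
      · intro i
        exact hF₀ (e.symm i).2 a
  · intro f hf a
    by_cases hle : (a : Cardinal) ≤ κ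
    · simp only [dif_pos hle]
      exact hb f hf ⟨a.1, a.2, hle⟩
    · simp only [dif_neg hle]
      have heq : f a = ((e.symm (e ⟨f, hf⟩) : ↥F₀) : ↥A → Ordinal.{0}) a := by
        rw [e.symm_apply_apply]
      rw [heq]
      exact Ordinal.le_iSup
        (fun i : Quotient.out κ => ((e.symm i : ↥F₀) : ↥A → Ordinal.{0}) a) (e ⟨f, hf⟩)

/-- If `κ` is regular, `κ ∈ spec(A)` and `κ < sup A`,
then `κ ∈ spec(A ∩ (κ+1)) = spec({a ∈ A : a ≤ κ})`. -/
theorem statement7 (A : Set Cardinal.{0}) (hA : ∀ a ∈ A, a.IsRegular)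
    (hbdd : BddAbove A) (κ : Cardinal.{0}) (hreg : κ.IsRegular)
    (hκ : κ ∈ spec A) (hlt : κ < sSup A) :
    κ ∈ spec {a ∈ A | a ≤ κ} := by
  classical
  obtain ⟨_, F, hFsub, hFcard, hFunb⟩ := hκ
  have hliftreg := isRegular_lift hreg
  set r : (↥A → Ordinal.{0}) → (↥{a ∈ A | a ≤ κ} → Ordinal.{0}) :=
    fun f a => f ⟨a.1, a.2.1⟩ with hrdef
  set F' := r '' F with hF'def
  have hF'sub : F' ⊆ piSet {a ∈ A | a ≤ κ} := by
    rintro g ⟨f, hf, rfl⟩ a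
    exact hFsub hf ⟨a.1, a.2.1⟩
  have hF'le : #F' ≤ Cardinal.lift.{1} κ := by
    rw [← hFcard]; exact Cardinal.mk_image_le
  have hF'card : #F' = Cardinal.lift.{1} κ := by
    by_contra hne
    have hF'lt : #F' < Cardinal.lift.{1} κ := lt_of_le_of_ne hF'le hne
    set r' : ↥F → ↥F' := fun x => ⟨r x.1, Set.mem_image_of_mem r x.2⟩ with hr'
    have hsum : #↥F = Cardinal.sum (fun b : ↥F' => #(r' ⁻¹' {b})) := by
      rw [← Cardinal.mk_sigma]
      exact Cardinal.mk_congr (Equiv.sigmaFiberEquiv r').symm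
    by_cases hfib : ∀ b : ↥F', #(r' ⁻¹' {b}) < Cardinal.lift.{1} κ
    · have hlt2 : #↥F < Cardinal.lift.{1} κ := by
        rw [hsum]
        exact Cardinal.sum_lt_of_isRegular hliftreg hF'lt hfib
      rw [hFcard] at hlt2; exact absurd hlt2 (lt_irrefl _)
    · push_neg at hfib
      obtain ⟨b, hble⟩ := hfib
      set S : Set (↥A → Ordinal.{0}) := {f ∈ F | r f = b.1} with hSdef
      have hSsub : S ⊆ F := fun f hf => hf.1
      have heq : Nonempty (↥(r' ⁻¹' {b}) ≃ ↥S) := ⟨{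
        toFun := fun x => ⟨x.1.1, x.1.2, congrArg Subtype.val x.2⟩
        invFun := fun y => ⟨⟨y.1, y.2.1⟩, Subtype.ext y.2.2⟩
        left_inv := fun x => rfl
        right_inv := fun y => rfl }⟩
      have hScard : #S = Cardinal.lift.{1} κ := by
        refine le_antisymm ?_ ?_
        · rw [← hFcard]; exact Cardinal.mk_le_mk_of_subset hSsub
        · calc Cardinal.lift.{1} κ ≤ #(r' ⁻¹' {b}) := hble
            _ = #S := Cardinal.mk_congr heq.some
      refine hFunb S hSsub hScard ?_
      refine bdd_of_restr_bdd A hA κ S (fun f hf => hFsub (hSsub hf)) hScard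
        b.1 (hF'sub b.2) ?_
      intro f hf a
      exact le_of_eq (congrFun hf.2 a)
  refine ⟨hreg, F', hF'sub, hF'card, ?_⟩
  intro F₀' hsub hcard' hBdd
  obtain ⟨h, hh, hb⟩ := hBdd
  set F₀ : Set (↥A → Ordinal.{0}) := {f ∈ F | r f ∈ F₀'} with hF₀def
  have hF₀sub : F₀ ⊆ F := fun f hf => hf.1
  have hF₀card : #F₀ = Cardinal.lift.{1} κ := by
    refine le_antisymm (by rw [← hFcard]; exact Cardinal.mk_le_mk_of_subset hF₀sub) ?_
    rw [← hcard']
    have hsub2 : F₀' ⊆ r '' F₀ := by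
      intro g hg
      obtain ⟨f, hf, rfl⟩ := hsub hg
      exact ⟨f, ⟨hf, hg⟩, rfl⟩
    calc #F₀' ≤ #(r '' F₀) := Cardinal.mk_le_mk_of_subset hsub2
      _ ≤ #F₀ := Cardinal.mk_image_le
  refine hFunb F₀ hF₀sub hF₀card ?_
  refine bdd_of_restr_bdd A hA κ F₀ (fun f hf => hFsub hf.1) hF₀card h hh ?_
  intro f hf a
  exact hb (r f) hf.2 a


end TukeySpec
end

section
/- Let κ be an uncountable regular limit cardinal, and let A ⊆ κ be a set of infinite regular cardinals that is unbounded in κ and nonstationary in κ. Let D be an ultrafilter on A containing every tail set {a ∈ A : a > β} for β < κ. Then cf(∏A/D) ≥ κ⁺. -/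
/-!
Fix a club `C ⊆ κ` disjoint from `A` and enumerate a family `S ⊆ ∏A` of size at most `κ`
as `⟨F i : i < κ⟩`. For `a ∈ A` the ordinal `c a = sup (C ∩ a)` lies below `a`, because
`a ∉ C` and `C` is closed; so, `a` being regular, `f a = sup_{i < c a} (F i a + 1)` defines
`f ∈ ∏A`. Given `i < κ`, pick `o ∈ C` above `i`: for every `a > o` we get `i < c a`, hence
`F i a < f a` on a tail of `A`, which lies in `D`. Thus no family of size `≤ κ` is cofinal
modulo `D`.
-/

universe u

open Cardinal Set

namespace TukeySpec

theorem IsClubIn.sSup_inter_Iio_lt {C : Set Ordinal.{0}} {κ α : Ordinal.{0}} (hC : IsClubIn C κ)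
    (hακ : α < κ) (hα : α ≠ 0) (hαC : α ∉ C) : sSup (C ∩ Iio α) < α := by
  refine (csSup_le' fun x hx => hx.2.le).lt_of_ne fun hsup =>
    hαC (hC.2.2 α hακ hα fun γ hγ => ?_)
  obtain ⟨o, ⟨hoC, hoα⟩, hγo⟩ := exists_lt_of_lt_csSup' (hsup ▸ hγ)
  exact ⟨o, hoC, hγo, hoα⟩

theorem zero_mem_piSet {A : Set Cardinal.{0}} (hA : ∀ a ∈ A, a ≠ 0) : 0 ∈ piSet A :=
  fun a => ord_pos.2 (pos_iff_ne_zero.2 (hA a a.2))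

theorem exists_mem_piSet_forall_lt {A : Set Cardinal.{0}} (hA : ∀ a ∈ A, a.IsRegular)
    (F : Ordinal.{0} → ↥A → Ordinal.{0}) (c : ↥A → Ordinal.{0})
    (hc : ∀ a, c a < (a : Cardinal).ord) (hF : ∀ a, ∀ i < c a, F i a < (a : Cardinal).ord) :
    ∃ f ∈ piSet A, ∀ a, ∀ i < c a, F i a < f a := by
  refine ⟨fun a => ⨆ i : Iio (c a), F i a + 1, fun a => ?_, fun a i hi => ?_⟩
  · have ha := hA a a.2
    apply Ordinal.lift_iSup_lt_of_lt_cof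
    · rw [← Ordinal.lift_cof, ha.cof_ord, mk_Iio_ordinal, lift_lift, lift_lt, ← lt_ord]
      exact hc a
    · exact fun i => (isSuccLimit_ord ha.aleph0_le).add_one_lt (hF a i i.2)
  · exact Ordinal.lt_iSup_add_one_iff.2 ⟨⟨i, hi⟩, le_rfl⟩

theorem exists_mem_piSet_eventually_lt {κ : Cardinal.{0}} {A : Set Cardinal.{0}}
    (hA : ∀ a ∈ A, a.IsRegular) (hsub : ∀ a ∈ A, a < κ) {C : Set Ordinal.{0}}
    (hC : IsClubIn C κ.ord) (hCA : ∀ a ∈ A, a.ord ∉ C) {L : Filter ↥A}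
    (htail : ∀ β < κ, ∀ᶠ a : ↥A in L, β < (a : Cardinal)) (F : Ordinal.{0} → ↥A → Ordinal.{0})
    (hF : ∀ i < κ.ord, F i ∈ piSet A) :
    ∃ f ∈ piSet A, ∀ i < κ.ord, ∀ᶠ a in L, F i a < f a := by
  set c : ↥A → Ordinal := fun a => sSup (C ∩ Iio (a : Cardinal).ord)
  have hc (a : ↥A) : c a < (a : Cardinal).ord :=
    hC.sSup_inter_Iio_lt (ord_lt_ord.2 (hsub a a.2)) (ord_pos.2 (hA a a.2).pos).ne'
      (hCA a a.2)
  obtain ⟨f, hf, hFf⟩ := exists_mem_piSet_forall_lt hA F c hc fun a i hi =>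
    hF i ((hi.trans (hc a)).trans (ord_lt_ord.2 (hsub a a.2))) a
  refine ⟨f, hf, fun i hi => ?_⟩
  obtain ⟨o, hoC, hio⟩ := hC.2.1 i hi
  filter_upwards [htail o.card (lt_ord.1 (hC.1 hoC))] with a hoa
  exact hFf a i (hio.trans_le (le_csSup ⟨_, fun x hx => hx.2.le⟩ ⟨hoC, lt_ord.2 hoa⟩))

universe v

theorem exists_enum_of_lift_mk_le {X : Type v} {S : Set X} (hS : S.Nonempty) {o : Ordinal.{u}}
    (h : lift.{u} #S ≤ lift.{v} o.card) :
    ∃ F : Ordinal.{u} → X, (∀ i, F i ∈ S) ∧ ∀ x ∈ S, ∃ i < o, F i = x := by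
  rw [← mk_toType] at h
  obtain ⟨e⟩ := lift_mk_le'.1 h
  have : Nonempty S := hS.to_subtype
  let idx : S → Ordinal.{u} := fun s => (Ordinal.ToType.mk.symm (e s) : Iio o)
  have hidx : idx.Injective :=
    Subtype.val_injective.comp (Ordinal.ToType.mk.symm.injective.comp e.injective)
  refine ⟨fun i => (Function.invFun idx i : S), fun i => (Function.invFun idx i : S).2,
    fun x hx => ⟨idx ⟨x, hx⟩, (Ordinal.ToType.mk.symm (e ⟨x, hx⟩)).2,
      congrArg Subtype.val (Function.leftInverse_invFun hidx ⟨x, hx⟩)⟩⟩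

theorem statement8_general (κ : Cardinal.{0})
    (A : Set Cardinal.{0}) (hA : ∀ a ∈ A, a.IsRegular) (hsub : ∀ a ∈ A, a < κ)
    (hns : ¬ StatIn A κ)
    (D : Ultrafilter ↥A)
    (htail : ∀ β < κ, {a : ↥A | β < (a : Cardinal)} ∈ D) :
    Cardinal.lift.{1} (Order.succ κ) ≤ cofUlt A D := by
  obtain ⟨C, hC, hCA⟩ : ∃ C, IsClubIn C κ.ord ∧ ∀ a ∈ A, a.ord ∉ C := by
    simpa [StatIn] using hns
  refine le_csInf
    ⟨_, piSet A, subset_rfl, rfl, fun f hf => ⟨f, hf, Filter.univ_mem' fun a => le_refl (f a)⟩⟩ ?_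
  rintro _ ⟨S, hSA, rfl, hScof⟩
  rw [lift_succ, Order.succ_le_iff]
  by_contra! hS
  have hSne : S.Nonempty := by
    obtain ⟨g, hg, -⟩ := hScof 0 (zero_mem_piSet fun a ha => (hA a ha).ne_zero)
    exact ⟨g, hg⟩
  obtain ⟨F, hFS, hSF⟩ := exists_enum_of_lift_mk_le hSne (o := κ.ord) (by simpa using hS)
  obtain ⟨f, hf, hFf⟩ :=
    exists_mem_piSet_eventually_lt hA hsub hC hCA htail F fun i _ => hSA (hFS i)
  obtain ⟨g, hgS, hfg⟩ := hScof f hf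
  obtain ⟨i, hi, rfl⟩ := hSF g hgS
  obtain ⟨a, hlt, hle⟩ := ((hFf i hi).and hfg).exists
  exact hlt.not_ge hle

/-- If `κ` is an uncountable regular limit cardinal, `A ⊆ κ` is an
unbounded nonstationary set of infinite regular cardinals, and `D` is an
ultrafilter on `A` extending the tail filter, then `cf(∏A/D) ≥ κ⁺`. -/
theorem statement8 (κ : Cardinal.{0}) (huncnt : ℵ₀ < κ) (hreg : κ.IsRegular)
    (hlim : ∀ μ < κ, Order.succ μ < κ)
    (A : Set Cardinal.{0}) (hA : ∀ a ∈ A, a.IsRegular) (hsub : ∀ a ∈ A, a < κ)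
    (hunb : ∀ β < κ, ∃ a ∈ A, β < a) (hns : ¬ StatIn A κ)
    (D : Ultrafilter ↥A)
    (htail : ∀ β < κ, {a : ↥A | β < (a : Cardinal)} ∈ D) :
    Cardinal.lift.{1} (Order.succ κ) ≤ cofUlt A D :=
  statement8_general κ A hA hsub hns D htail

end TukeySpec
end
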